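/- In the same setting, Var[N1 - N2 | Y=1] = Var[N1 - N2 | Y=0] = 2(p1(1-p2) + p2(1-p1))/(p1+p2)^2. -/

import Mathlib

/-- Conditional joint pmf of the failure counts for the RR/LRR inner algorithm: given the
output, a trajectory with `j` population-1 failures and `k` population-2 failures (followed
by the final success) has conditional probability
`C(j+k,k) ((1-p1)/2)^j ((1-p2)/2)^k (p1+p2)/2`, both given `Y = 1` (where `N1 = j+1`,
`N2 = k`) and given `Y = 0` (where `N1 = j`, `N2 = k+1`). -/
noncomputable def condW (p1 p2 : ℝ) (j k : ℕ) : ℝ :=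
  (Nat.choose (j + k) k : ℝ) * ((1 - p1) / 2) ^ j * ((1 - p2) / 2) ^ k * ((p1 + p2) / 2)

/-!
`condW p1 p2` is the negative multinomial law `C(j+k,k) a^j b^k c` with `a = (1-p1)/2`,
`b = (1-p2)/2`, `c = 1 - a - b`. Summing the negative binomial series first in `k` and then in
`j` gives its binomial moments `E[C(j,p) C(k,q)] = C(p+q,p) A^p B^q`, where `A = a/c` and
`B = b/c`. Hence `j + s - k` has mean `A - B + s` and variance `(A - B)^2 + A + B` for every
shift `s`, and `N1 - N2` is `j - k` shifted by `s = 1` given `Y = 1` and by `s = -1` given `Y = 0`.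
-/

lemma hasSum_add_choose_mul_geometric_of_norm_lt_one {𝕜 : Type*} [NormedField 𝕜]
    [HasSummableGeomSeries 𝕜] {x : 𝕜} (hx : ‖x‖ < 1) (n d : ℕ) :
    HasSum (fun k : ℕ ↦ ((k + n).choose (n + d) : 𝕜) * x ^ k) (x ^ d / (1 - x) ^ (n + d + 1)) := by
  rw [← hasSum_nat_add_iff' d]
  have hlow : ∑ i ∈ Finset.range d, ((i + n).choose (n + d) : 𝕜) * x ^ i = 0 :=
    Finset.sum_eq_zero fun i hi ↦ by
      rw [Nat.choose_eq_zero_of_lt (by simp at hi; omega), Nat.cast_zero, zero_mul]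
  have hshift : (fun k : ℕ ↦ ((k + d + n).choose (n + d) : 𝕜) * x ^ (k + d)) =
      fun k ↦ x ^ d * (((k + (n + d)).choose (n + d) : 𝕜) * x ^ k) := by
    ext k
    rw [pow_add, show k + d + n = k + (n + d) by omega]
    ring
  rw [hlow, sub_zero, div_eq_mul_one_div, hshift]
  exact (hasSum_choose_mul_geometric_of_norm_lt_one (n + d) hx).mul_left (x ^ d)

lemma Nat.add_choose_mul_choose (j k q : ℕ) :
    (j + k).choose k * k.choose q = (j + q).choose q * (k + j).choose (j + q) := by
  rcases lt_or_ge k q with hkq | hqk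
  · rw [Nat.choose_eq_zero_of_lt hkq, Nat.choose_eq_zero_of_lt (by omega : k + j < j + q),
      mul_zero, mul_zero]
  rw [Nat.choose_mul hqk, mul_comm ((j + q).choose q), Nat.choose_mul (Nat.le_add_left q j),
    add_comm k j, Nat.add_sub_cancel,
    Nat.choose_symm_of_eq_add (by omega : j + k - q = k - q + j)]

lemma Nat.choose_mul_add_choose (j p q : ℕ) :
    j.choose p * (j + q).choose q = (p + q).choose p * (j + q).choose (q + p) := by
  rw [add_comm q p, Nat.choose_symm_add, mul_comm, mul_comm ((p + q).choose q),
    Nat.choose_mul (Nat.le_add_left q p)]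
  simp

lemma HasSum.of_prod_fiberwise_of_nonneg {α β : Type*} {f : α × β → ℝ} (hf : 0 ≤ f)
    {g : α → ℝ} {v : ℝ} (hg : ∀ a, HasSum (fun b ↦ f (a, b)) (g a)) (hv : HasSum g v) :
    HasSum f v := by
  have hs : Summable f := (summable_prod_of_nonneg hf).2
    ⟨fun a ↦ (hg a).summable, by simpa only [(hg _).tsum_eq] using hv.summable⟩
  exact (hs.hasSum.prod_fiberwise hg).unique hv ▸ hs.hasSum

noncomputable def negMultinomialWeight (a b : ℝ) (x : ℕ × ℕ) : ℝ :=
  ((x.1 + x.2).choose x.2 : ℝ) * a ^ x.1 * b ^ x.2 * (1 - a - b)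

namespace negMultinomialWeight

variable {a b : ℝ}

lemma nonneg (ha : 0 ≤ a) (hb : 0 ≤ b) (hab : a + b ≤ 1) (x : ℕ × ℕ) :
    0 ≤ negMultinomialWeight a b x := by
  unfold negMultinomialWeight
  have : 0 ≤ 1 - a - b := by linarith
  positivity

lemma hasSum_choose_mul_choose_fiber (hb : 0 ≤ b) (hb1 : b < 1) (j p q : ℕ) :
    HasSum (fun k ↦ ((j.choose p * k.choose q : ℕ) : ℝ) * negMultinomialWeight a b (j, k))
      ((j.choose p * (j + q).choose q : ℕ) * a ^ j * (1 - a - b) *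
        (b ^ q / (1 - b) ^ (j + q + 1))) := by
  have hb' : ‖b‖ < 1 := by rwa [Real.norm_of_nonneg hb]
  refine ((hasSum_add_choose_mul_geometric_of_norm_lt_one hb' j q).mul_left _).congr_fun
    fun k ↦ ?_
  have hchoose := congrArg (Nat.cast : ℕ → ℝ) (Nat.add_choose_mul_choose j k q)
  simp only [negMultinomialWeight]
  push_cast at hchoose ⊢
  linear_combination (j.choose p * a ^ j * b ^ k * (1 - a - b) : ℝ) * hchoose

theorem hasSum_choose_mul_choose (ha : 0 ≤ a) (hb : 0 ≤ b) (hab : a + b < 1) (p q : ℕ) :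
    HasSum
      (fun x : ℕ × ℕ ↦ ((x.1.choose p * x.2.choose q : ℕ) : ℝ) * negMultinomialWeight a b x)
      ((p + q).choose p * (a / (1 - a - b)) ^ p * (b / (1 - a - b)) ^ q) := by
  have hb1 : b < 1 := by linarith
  have hc : 1 - a - b ≠ 0 := by linarith
  have hb0 : 1 - b ≠ 0 := by linarith
  have hr : ‖a / (1 - b)‖ < 1 := by
    rw [Real.norm_of_nonneg (div_nonneg ha (by linarith)), div_lt_one (by linarith)]; linarith
  refine .of_prod_fiberwise_of_nonneg
    (fun x ↦ mul_nonneg (Nat.cast_nonneg _) (nonneg ha hb hab.le x))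
    (hasSum_choose_mul_choose_fiber hb hb1 · p q) ?_
  have h := (hasSum_add_choose_mul_geometric_of_norm_lt_one hr q p).mul_left
    ((p + q).choose p * ((1 - a - b) * b ^ q / (1 - b) ^ (q + 1)))
  have h1r : 1 - a / (1 - b) = (1 - a - b) / (1 - b) := by field_simp; ring
  have hval : ((p + q).choose p * (a / (1 - a - b)) ^ p * (b / (1 - a - b)) ^ q : ℝ) =
      (p + q).choose p * ((1 - a - b) * b ^ q / (1 - b) ^ (q + 1)) *
        ((a / (1 - b)) ^ p / (1 - a / (1 - b)) ^ (q + p + 1)) := by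
    rw [h1r, div_pow, div_pow, div_pow, div_pow]
    field_simp
    ring
  rw [hval]
  refine h.congr_fun fun j ↦ ?_
  rw [Nat.choose_mul_add_choose, div_pow]
  push_cast
  field_simp
  ring

theorem hasSum_add_sub_mul (ha : 0 ≤ a) (hb : 0 ≤ b) (hab : a + b < 1) (s : ℝ) :
    HasSum (fun x : ℕ × ℕ ↦ ((x.1 : ℝ) + s - x.2) * negMultinomialWeight a b x)
      (a / (1 - a - b) - b / (1 - a - b) + s) := by
  have M := hasSum_choose_mul_choose ha hb hab
  have h := ((M 1 0).sub (M 0 1)).add ((M 0 0).mul_left s)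
  norm_num at h
  exact h.congr_fun fun x ↦ by ring

theorem hasSum_add_sub_sq_mul (ha : 0 ≤ a) (hb : 0 ≤ b) (hab : a + b < 1) (s : ℝ) :
    HasSum (fun x : ℕ × ℕ ↦ ((x.1 : ℝ) + s - x.2) ^ 2 * negMultinomialWeight a b x)
      ((a / (1 - a - b) - b / (1 - a - b) + s) ^ 2 +
        ((a / (1 - a - b) - b / (1 - a - b)) ^ 2 + a / (1 - a - b) + b / (1 - a - b))) := by
  have M := hasSum_choose_mul_choose ha hb hab
  have h := (((((M 2 0).mul_left 2).sub ((M 1 1).mul_left 2)).add ((M 0 2).mul_left 2)).add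
    (((M 1 0).mul_left (2 * s + 1)).add ((M 0 1).mul_left (1 - 2 * s)))).add
    ((M 0 0).mul_left (s ^ 2))
  norm_num [Nat.cast_choose_two] at h
  ring_nf at h ⊢
  exact h.congr_fun fun x ↦ by ring

theorem variance_add_sub (ha : 0 ≤ a) (hb : 0 ≤ b) (hab : a + b < 1) (s : ℝ) :
    (∑' j : ℕ, ∑' k : ℕ, ((j : ℝ) + s - k) ^ 2 * negMultinomialWeight a b (j, k)) -
      (∑' j : ℕ, ∑' k : ℕ, ((j : ℝ) + s - k) * negMultinomialWeight a b (j, k)) ^ 2 =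
      (a / (1 - a - b) - b / (1 - a - b)) ^ 2 + a / (1 - a - b) + b / (1 - a - b) := by
  have h2 := hasSum_add_sub_sq_mul ha hb hab s
  have h1 := hasSum_add_sub_mul ha hb hab s
  rw [← h2.summable.tsum_prod, ← h1.summable.tsum_prod, h2.tsum_eq, h1.tsum_eq]
  ring

end negMultinomialWeight

/-- `Var[N1 - N2 | Y = 1] = Var[N1 - N2 | Y = 0] = 2(p1(1-p2)+p2(1-p1))/(p1+p2)^2`. -/
theorem stmt6 (p1 p2 : ℝ) (hp1 : p1 ∈ Set.Ioo (0:ℝ) 1) (hp2 : p2 ∈ Set.Ioo (0:ℝ) 1) :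
    ((∑' j : ℕ, ∑' k : ℕ, ((j : ℝ) + 1 - (k : ℝ)) ^ 2 * condW p1 p2 j k) -
      (∑' j : ℕ, ∑' k : ℕ, ((j : ℝ) + 1 - (k : ℝ)) * condW p1 p2 j k) ^ 2 =
      2 * (p1 * (1 - p2) + p2 * (1 - p1)) / (p1 + p2) ^ 2) ∧
    ((∑' j : ℕ, ∑' k : ℕ, ((j : ℝ) - ((k : ℝ) + 1)) ^ 2 * condW p1 p2 j k) -
      (∑' j : ℕ, ∑' k : ℕ, ((j : ℝ) - ((k : ℝ) + 1)) * condW p1 p2 j k) ^ 2 =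
      2 * (p1 * (1 - p2) + p2 * (1 - p1)) / (p1 + p2) ^ 2) := by
  obtain ⟨hp1, hp1'⟩ := hp1
  obtain ⟨hp2, hp2'⟩ := hp2
  have hc : 1 - (1 - p1) / 2 - (1 - p2) / 2 = (p1 + p2) / 2 := by ring
  have hw : ∀ j k, condW p1 p2 j k = negMultinomialWeight ((1 - p1) / 2) ((1 - p2) / 2) (j, k) := by
    intro j k
    rw [condW, negMultinomialWeight, hc]
  have hvar := negMultinomialWeight.variance_add_sub (a := (1 - p1) / 2) (b := (1 - p2) / 2)
    (by linarith) (by linarith) (by linarith)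
  simp only [hw, show ∀ x y : ℝ, x - (y + 1) = x + -1 - y from fun _ _ ↦ by ring]
  constructor
  · rw [hvar 1, hc]; field_simp; ring
  · rw [hvar (-1), hc]; field_simp; ring
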